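/- arXiv:2605.17208 — 2 statements merged into one kernel-verified Lean document; each statement's English description precedes it below -/
import Mathlib

section
/- For the system x0' = mκ(α0/(1+ρ0^m x0 + x1) − 1)x0, x1' = mκ(α1/(1 + x0 + ρ1^m x1) − 1)x1, if α0 > α1 and 0 < ρ0 < 1, then the Jacobian at E1 = ((α0−1)/ρ0^m, 0) has eigenvalues mκ(1/α0 − 1) and mκ(α1/(1 + (α0−1)/ρ0^m) − 1), both of which are negative when α0 > 1. -/
/-- The Jacobian of the competition system at `E1 = ((α0-1)/ρ0^m, 0)` is upper triangular
with eigenvalues `mκ(1/α0 - 1)` and `mκ(α1/(1 + (α0-1)/ρ0^m) - 1)`, both negative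
when `α0 > 1` (and `α0 > α1`, `0 < ρ0 < 1`). -/
theorem E1_jacobian_eigenvalues_negative
    (m κ α0 α1 ρ0 ρ1 : ℝ) (hm : 0 < m) (hκ : 0 < κ) (hρ0 : 0 < ρ0) (hρ0' : ρ0 < 1)
    (hρ1 : 0 < ρ1) (hα1 : 0 < α1) (hα : α1 < α0) (hα0 : 1 < α0) :
    let x0 : ℝ := (α0 - 1) / ρ0 ^ m
    let J : Matrix (Fin 2) (Fin 2) ℝ :=
      !![m * κ * (α0 * (1 + 0) / (1 + ρ0 ^ m * x0 + 0) ^ 2 - 1),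
           -(m * κ * (α0 * x0 / (1 + ρ0 ^ m * x0 + 0) ^ 2));
         -(m * κ * (α1 * 0 / (1 + x0 + ρ1 ^ m * 0) ^ 2)),
           m * κ * (α1 * (1 + x0) / (1 + x0 + ρ1 ^ m * 0) ^ 2 - 1)]
    (m * κ * (1 / α0 - 1)) ∈ spectrum ℝ J ∧
    (m * κ * (α1 / (1 + (α0 - 1) / ρ0 ^ m) - 1)) ∈ spectrum ℝ J ∧
    m * κ * (1 / α0 - 1) < 0 ∧
    m * κ * (α1 / (1 + (α0 - 1) / ρ0 ^ m) - 1) < 0 := by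
  intro x0 J
  have ht : (0:ℝ) < ρ0 ^ m := Real.rpow_pos_of_pos hρ0 m
  have hx0 : ρ0 ^ m * x0 = α0 - 1 := by
    show ρ0 ^ m * ((α0 - 1) / ρ0 ^ m) = α0 - 1
    field_simp
  have hα0pos : (0:ℝ) < α0 := by linarith
  have hden : 1 + ρ0 ^ m * x0 + 0 = α0 := by rw [hx0]; ring
  have hx0pos : 0 < x0 := div_pos (by linarith) ht
  have hJ00 : J 0 0 = m * κ * (1 / α0 - 1) := by
    show m * κ * (α0 * (1 + 0) / (1 + ρ0 ^ m * x0 + 0) ^ 2 - 1) = _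
    rw [hden]
    field_simp
    ring
  have hJ11 : J 1 1 = m * κ * (α1 / (1 + (α0 - 1) / ρ0 ^ m) - 1) := by
    show m * κ * (α1 * (1 + x0) / (1 + x0 + ρ1 ^ m * 0) ^ 2 - 1) = _
    have hx1 : (0:ℝ) < 1 + x0 := by linarith
    have hx0e : (α0 - 1) / ρ0 ^ m = x0 := rfl
    rw [hx0e]
    have h0 : 1 + x0 + ρ1 ^ m * 0 = 1 + x0 := by ring
    rw [h0]
    have h1 : α1 * (1 + x0) / (1 + x0) ^ 2 = α1 / (1 + x0) := by
      rw [sq]; field_simp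
    rw [h1]
  have hJ10 : J 1 0 = 0 := by
    show -(m * κ * (α1 * 0 / (1 + x0 + ρ1 ^ m * 0) ^ 2)) = 0
    ring
  have hmem : ∀ μ : ℝ, (μ = J 0 0 ∨ μ = J 1 1) → μ ∈ spectrum ℝ J := by
    intro μ hμ
    rw [spectrum.mem_iff, Matrix.isUnit_iff_isUnit_det]
    have hdet : (algebraMap ℝ (Matrix (Fin 2) (Fin 2) ℝ) μ - J).det
        = (μ - J 0 0) * (μ - J 1 1) - (- J 0 1) * (- J 1 0) := by
      rw [Matrix.det_fin_two]
      simp [Matrix.algebraMap_eq_diagonal]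
    rw [hdet, hJ10]
    rcases hμ with h | h <;> rw [h] <;> simp
  have hlt1 : ρ0 ^ m < 1 := Real.rpow_lt_one (le_of_lt hρ0) hρ0' hm
  have hmk : 0 < m * κ := mul_pos hm hκ
  have h1 : m * κ * (1 / α0 - 1) < 0 := by
    have : 1 / α0 < 1 := by rw [div_lt_one hα0pos]; exact hα0
    nlinarith
  have h2 : m * κ * (α1 / (1 + (α0 - 1) / ρ0 ^ m) - 1) < 0 := by
    have hd : 0 < 1 + (α0 - 1) / ρ0 ^ m := by linarith [hx0pos]
    have hlt : α1 / (1 + (α0 - 1) / ρ0 ^ m) < 1 := by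
      rw [div_lt_one hd]
      have h3 : α0 - 1 < (α0 - 1) / ρ0 ^ m := by
        rw [lt_div_iff₀ ht]; nlinarith
      linarith
    nlinarith
  exact ⟨hmem _ (Or.inl hJ00.symm), hmem _ (Or.inr hJ11.symm), h1, h2⟩
end

section
/- For the system x0' = mκ(α0/(1+ρ0^m x0 + x1) − 1)x0, x1' = mκ(α1/(1 + x0 + ρ1^m x1) − 1)x1 with α1 > 1, the point E2 = (0, (α1−1)/ρ1^m) is an equilibrium; moreover, if ρ1^m < (α1 − 1)/(α0 − 1) with α0 > 1, then both eigenvalues mκ(α0/(1 + (α1−1)/ρ1^m) − 1) and mκ(1/α1 − 1) of the Jacobian at E2 are negative. -/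
/-- The planar vector field of the nondimensionalized two-population competition model. -/
noncomputable def tumorVF (m : ℕ) (κ α0 α1 ρ0 ρ1 : ℝ) (p : ℝ × ℝ) : ℝ × ℝ :=
  ((m : ℝ) * κ * (α0 / (1 + ρ0 ^ m * p.1 + p.2) - 1) * p.1,
   (m : ℝ) * κ * (α1 / (1 + p.1 + ρ1 ^ m * p.2) - 1) * p.2)

/-!
The Jacobian at `E2 = (0, x1)` is lower triangular, so its eigenvalues are its diagonal entries.
Since `1 + ρ1^m x1 = α1` at `E2`, these simplify to `mκ(α0/(1 + x1) - 1)` and `mκ(1/α1 - 1)`;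
the first is negative because `ρ1^m (α0 - 1) < α1 - 1` says exactly that `α0 < 1 + x1`.
-/

open Polynomial in
theorem Matrix.IsLowerTriangular.diag_mem_spectrum {n R : Type*} [Fintype n] [DecidableEq n]
    [LinearOrder n] [CommRing R] [Nontrivial R] {M : Matrix n n R} (hM : M.IsLowerTriangular)
    (i : n) : M i i ∈ spectrum R M := by
  apply Matrix.mem_spectrum_of_isRoot_charpoly
  rw [← M.charpoly_transpose, Matrix.charpoly_of_isUpperTriangular M.transpose hM.transpose,
    IsRoot, eval_prod]
  exact Finset.prod_eq_zero (Finset.mem_univ i) (by simp)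

theorem Matrix.isLowerTriangular_fin_two {R : Type*} [Zero R] (a c d : R) :
    (!![a, 0; c, d] : Matrix (Fin 2) (Fin 2) R).IsLowerTriangular := by
  intro i j hij
  fin_cases i <;> fin_cases j <;> first | rfl | exact absurd hij (by decide)

theorem one_add_mul_div_cancel_sub_one {K : Type*} [Field K] {r : K} (hr : r ≠ 0) (a : K) :
    1 + r * ((a - 1) / r) = a := by
  rw [mul_div_cancel₀ _ hr, add_sub_cancel]

theorem div_one_add_div_lt_one {K : Type*} [Field K] [LinearOrder K] [IsStrictOrderedRing K]
    {r α0 α1 : K} (hr : 0 < r) (hα0 : 1 < α0)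
    (h : r < (α1 - 1) / (α0 - 1)) : α0 / (1 + (α1 - 1) / r) < 1 := by
  have hα0x : α0 - 1 < (α1 - 1) / r := by
    rw [lt_div_iff₀ hr, mul_comm]
    exact (lt_div_iff₀ (sub_pos.mpr hα0)).mp h
  rw [div_lt_one (by linarith)]
  linarith

theorem tumorVF_E2_eq_zero (m : ℕ) (κ α0 α1 ρ0 ρ1 : ℝ) (hρ1 : ρ1 ≠ 0) (hα1 : α1 ≠ 0) :
    tumorVF m κ α0 α1 ρ0 ρ1 (0, (α1 - 1) / ρ1 ^ m) = 0 := by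
  have hx1 : 1 + 0 + ρ1 ^ m * ((α1 - 1) / ρ1 ^ m) = α1 := by
    rw [add_zero, one_add_mul_div_cancel_sub_one (pow_ne_zero m hρ1)]
  simp only [tumorVF, Prod.mk_eq_zero, mul_zero, hx1, div_self hα1, sub_self, zero_mul, and_self]

theorem E2_equilibrium_and_stable_general
    (m : ℕ) (κ α0 α1 ρ0 ρ1 : ℝ) (hm : 1 ≤ m) (hκ : 0 < κ)
    (hρ1 : 0 < ρ1)
    (hα1 : 1 < α1) (hα0 : 1 < α0)
    (hcond : ρ1 ^ m < (α1 - 1) / (α0 - 1)) :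
    let x1 : ℝ := (α1 - 1) / ρ1 ^ m
    let J : Matrix (Fin 2) (Fin 2) ℝ :=
      !![(m : ℝ) * κ * (α0 * (1 + x1) / (1 + ρ0 ^ m * 0 + x1) ^ 2 - 1),
           -((m : ℝ) * κ * (α0 * 0 / (1 + ρ0 ^ m * 0 + x1) ^ 2));
         -((m : ℝ) * κ * (α1 * x1 / (1 + 0 + ρ1 ^ m * x1) ^ 2)),
           (m : ℝ) * κ * (α1 * (1 + 0) / (1 + 0 + ρ1 ^ m * x1) ^ 2 - 1)]
    tumorVF m κ α0 α1 ρ0 ρ1 (0, x1) = 0 ∧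
    ((m : ℝ) * κ * (α0 / (1 + (α1 - 1) / ρ1 ^ m) - 1)) ∈ spectrum ℝ J ∧
    ((m : ℝ) * κ * (1 / α1 - 1)) ∈ spectrum ℝ J ∧
    (m : ℝ) * κ * (α0 / (1 + (α1 - 1) / ρ1 ^ m) - 1) < 0 ∧
    (m : ℝ) * κ * (1 / α1 - 1) < 0 := by
  intro x1 J
  have hρm : 0 < ρ1 ^ m := pow_pos hρ1 m
  have hmκ : 0 < (m : ℝ) * κ := mul_pos (by exact_mod_cast hm) hκ
  have h1x1 : 0 < 1 + x1 := by positivity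
  have hJ : J = !![(m : ℝ) * κ * (α0 / (1 + (α1 - 1) / ρ1 ^ m) - 1), 0;
      J 1 0, (m : ℝ) * κ * (1 / α1 - 1)] := by
    have hα1x : 1 + 0 + ρ1 ^ m * x1 = α1 := by
      rw [add_zero, one_add_mul_div_cancel_sub_one hρm.ne']
    ext i j
    fin_cases i <;> fin_cases j
    · change (m : ℝ) * κ * (α0 * (1 + x1) / (1 + ρ0 ^ m * 0 + x1) ^ 2 - 1) = _
      rw [mul_zero, add_zero, sq, mul_div_mul_right _ _ h1x1.ne']
      rfl
    · simp [J]
    · rfl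
    · change (m : ℝ) * κ * (α1 * (1 + 0) / (1 + 0 + ρ1 ^ m * x1) ^ 2 - 1) = _
      rw [hα1x, add_zero, mul_one, sq, div_mul_cancel_left₀ (by positivity), ← one_div]
      rfl
  refine ⟨tumorVF_E2_eq_zero m κ α0 α1 ρ0 ρ1 hρ1.ne' (by positivity), ?_, ?_,
    mul_neg_of_pos_of_neg hmκ (sub_neg.mpr (div_one_add_div_lt_one hρm hα0 hcond)),
    mul_neg_of_pos_of_neg hmκ (sub_neg.mpr ((div_lt_one (by positivity)).mpr hα1))⟩
  · rw [hJ]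
    exact (Matrix.isLowerTriangular_fin_two _ _ _).diag_mem_spectrum 0
  · rw [hJ]
    exact (Matrix.isLowerTriangular_fin_two _ _ _).diag_mem_spectrum 1

/-- If `α1 > 1`, the point `E2 = (0, (α1-1)/ρ1^m)` is an equilibrium; moreover, if
`ρ1^m < (α1-1)/(α0-1)` with `α0 > 1`, then both eigenvalues of the Jacobian at `E2`,
namely `mκ(α0/(1+(α1-1)/ρ1^m) - 1)` and `mκ(1/α1 - 1)`, are negative. -/
theorem E2_equilibrium_and_stable
    (m : ℕ) (κ α0 α1 ρ0 ρ1 : ℝ) (hm : 1 ≤ m) (hκ : 0 < κ)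
    (hρ0 : 0 < ρ0) (hρ1 : 0 < ρ1) (hρ1' : ρ1 < 1)
    (hα1 : 1 < α1) (hα0 : 1 < α0) (hα : α1 < α0)
    (hcond : ρ1 ^ m < (α1 - 1) / (α0 - 1)) :
    let x1 : ℝ := (α1 - 1) / ρ1 ^ m
    let J : Matrix (Fin 2) (Fin 2) ℝ :=
      !![(m : ℝ) * κ * (α0 * (1 + x1) / (1 + ρ0 ^ m * 0 + x1) ^ 2 - 1),
           -((m : ℝ) * κ * (α0 * 0 / (1 + ρ0 ^ m * 0 + x1) ^ 2));
         -((m : ℝ) * κ * (α1 * x1 / (1 + 0 + ρ1 ^ m * x1) ^ 2)),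
           (m : ℝ) * κ * (α1 * (1 + 0) / (1 + 0 + ρ1 ^ m * x1) ^ 2 - 1)]
    tumorVF m κ α0 α1 ρ0 ρ1 (0, x1) = 0 ∧
    ((m : ℝ) * κ * (α0 / (1 + (α1 - 1) / ρ1 ^ m) - 1)) ∈ spectrum ℝ J ∧
    ((m : ℝ) * κ * (1 / α1 - 1)) ∈ spectrum ℝ J ∧
    (m : ℝ) * κ * (α0 / (1 + (α1 - 1) / ρ1 ^ m) - 1) < 0 ∧
    (m : ℝ) * κ * (1 / α1 - 1) < 0 :=
  E2_equilibrium_and_stable_general m κ α0 α1 ρ0 ρ1 hm hκ hρ1 hα1 hα0 hcond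
end
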